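/- arXiv:math/9809016 — 2 statements merged into one kernel-verified Lean document; each statement's English description precedes it below -/
import Mathlib

section
/- Let V be a real vector space with a complex structure J, let T ⊂ V⊗ℝℂ be the √-1-eigenspace of J with basis e₁,…,e_n over ℂ. For a Hermitian n×n matrix H = (h_{ij}), set ω(H) = √-1 Σ_{i,j} h_{ij} (e_i ∧ ē_j). If H₁,…,H_n are positive semidefinite Hermitian matrices, then there exists a real number λ ≥ 0 such that ω(H₁) ∧ ⋯ ∧ ω(H_n) = λ (√-1)ⁿ (e₁∧ē₁) ∧ ⋯ ∧ (e_n∧ē_n). -/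
/-!
Factor each `H k = (B k)ᴴ * B k`. Then `ω(H k)` is a sum of decomposable forms `u ∧ σ u` with
`u = ∑ i, conj (B k α i) • e i`, one for each row `α` of `B k`. Expanding the product of the
`ω(H k)`, every term has the shape `∏ k, u k ∧ σ (u k)`, which up to the sign `(-1) ^ n.choose 2`
is `(u 1 ∧ ⋯ ∧ u n) ∧ (σ (u 1) ∧ ⋯ ∧ σ (u n))`. If `u = C • e`, the first factor is `det C` times
that of `e` and, `σ` being antilinear, the second is `conj (det C)` times that of `σ ∘ e`; so the
term is `|det C|²` times the volume element, and the signs cancel.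
-/

open scoped ComplexOrder Matrix

namespace AlternatingMap

variable {R M N ι : Type*} [CommRing R] [AddCommGroup M] [Module R M] [AddCommGroup N] [Module R N]
  [Fintype ι] [DecidableEq ι]

theorem eq_det_smul_basisFun (g : (ι → R) [⋀^ι]→ₗ[R] N) (A : Matrix ι ι R) :
    g A = A.det • g (Pi.basisFun R ι) := by
  set b := Pi.basisFun R ι
  suffices g = b.det.smulRight (g b) by
    conv_lhs => rw [this]
    rw [Pi.basisFun_det]
    rfl
  refine b.ext_alternating fun v hv => ?_
  let τ : Equiv.Perm ι := Equiv.ofBijective v (Finite.injective_iff_bijective.1 hv)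
  change g (b ∘ τ) = b.det.smulRight (g b) (b ∘ τ)
  simp [map_perm, Module.Basis.det_self]

theorem map_sum_smul_eq_det_smul (f : M [⋀^ι]→ₗ[R] N) (A : Matrix ι ι R) (v : ι → M) :
    f (fun i => ∑ j, A i j • v j) = A.det • f v := by
  have h := (f.compLinearMap (Fintype.linearCombination R v)).eq_det_smul_basisFun A
  simp only [compLinearMap_apply, Pi.basisFun_apply, Fintype.linearCombination_apply_single,
    one_smul] at h
  exact h

end AlternatingMap

namespace List

variable {A : Type*} [Semiring A]

theorem prod_ofFn_smul {R : Type*} [CommSemiring R] [Algebra R A] {n : ℕ} (c : R)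
    (x : Fin n → A) : (ofFn fun k => c • x k).prod = c ^ n • (ofFn x).prod := by
  simpa using (MultilinearMap.mkPiAlgebraFin R n A).map_smul_univ (fun _ => c) x

theorem prod_ofFn_sum {n : ℕ} {m : Type*} [Fintype m] [DecidableEq m] (x : Fin n → m → A) :
    (ofFn fun k => ∑ a, x k a).prod = ∑ α : Fin n → m, (ofFn fun k => x k (α k)).prod := by
  simpa using (MultilinearMap.mkPiAlgebraFin ℕ n A).map_sum x

end List

namespace ExteriorAlgebra

variable {R M : Type*} [CommRing R] [AddCommGroup M] [Module R M]

theorem ι_mul_ιMulti {n : ℕ} (x : M) (v : Fin n → M) :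
    ι R x * ιMulti R n v = (-1 : R) ^ n • (ιMulti R n v * ι R x) := by
  induction n with
  | zero => simp
  | succ n ih =>
    have swap : ι R x * ι R (v 0) = -(ι R (v 0) * ι R x) :=
      eq_neg_of_add_eq_zero_left (ι_add_mul_swap x (v 0))
    rw [ιMulti_succ_apply, ← mul_assoc, swap, neg_mul, mul_assoc, ih, mul_smul_comm, pow_succ,
      mul_neg_one, neg_smul, mul_assoc]

theorem prod_ofFn_ι_mul_ι {n : ℕ} (a b : Fin n → M) :
    (List.ofFn fun k => ι R (a k) * ι R (b k)).prod
      = (-1 : R) ^ n.choose 2 • (ιMulti R n a * ιMulti R n b) := by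
  induction n with
  | zero => simp
  | succ n ih =>
    have reorder (x y : M) (a' b' : Fin n → M) :
        ι R x * ι R y * (ιMulti R n a' * ιMulti R n b')
          = (-1 : R) ^ n • (ι R x * ιMulti R n a' * (ι R y * ιMulti R n b')) := by
      rw [mul_assoc, ← mul_assoc (ι R y), ι_mul_ιMulti]
      simp only [smul_mul_assoc, mul_smul_comm, mul_assoc]
    simp only [List.ofFn_succ, List.prod_cons, ih, ιMulti_succ_apply, Matrix.vecTail,
      Function.comp_def]
    rw [mul_smul_comm, reorder, smul_smul, ← pow_add, Nat.choose_succ_succ', Nat.choose_one_right,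
      add_comm]

variable [StarRing R]

theorem prod_ofFn_ι_mul_ι_sum_smul {n : ℕ} (σ : M →ₗ⋆[R] M) (C : Matrix (Fin n) (Fin n) R)
    (e : Fin n → M) :
    (List.ofFn fun k => ι R (∑ i, C k i • e i) * ι R (σ (∑ i, C k i • e i))).prod
      = (C.det * star C.det) • (List.ofFn fun k => ι R (e k) * ι R (σ (e k))).prod := by
  have hσ (k : Fin n) : σ (∑ i, C k i • e i) = ∑ i, C.map star k i • σ (e i) := by
    simp [map_sum, map_smulₛₗ, starRingEnd_apply]
  have hdet : (C.map star).det = star C.det := ((starRingEnd R).map_det C).symm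
  simp only [hσ, prod_ofFn_ι_mul_ι]
  rw [(ιMulti R n (M := M)).map_sum_smul_eq_det_smul,
    (ιMulti R n (M := M)).map_sum_smul_eq_det_smul, smul_mul_smul_comm, hdet, smul_comm]

theorem sum_conjTranspose_mul_smul_ι_mul_ι {m n : Type*} [Fintype m] [Fintype n]
    (σ : M →ₗ⋆[R] M) (B : Matrix m n R) (e : n → M) :
    ∑ i, ∑ j, (Bᴴ * B) i j • (ι R (e i) * ι R (σ (e j)))
      = ∑ α, ι R (∑ i, star (B α i) • e i) * ι R (σ (∑ i, star (B α i) • e i)) := by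
  simp only [map_sum, map_smulₛₗ, starRingEnd_apply, star_star, Finset.sum_mul_sum,
    smul_mul_smul_comm, Matrix.mul_apply, Matrix.conjTranspose_apply, Finset.sum_smul,
    RingHom.id_apply]
  conv_rhs => rw [Finset.sum_comm]
  exact Finset.sum_congr rfl fun i _ => Finset.sum_comm

end ExteriorAlgebra

open scoped MatrixOrder Matrix.Norms.L2Operator in
theorem Matrix.PosSemidef.exists_eq_conjTranspose_mul_self {𝕜 n : Type*} [RCLike 𝕜] [Fintype n]
    [DecidableEq n] {A : Matrix n n 𝕜} (hA : A.PosSemidef) : ∃ B : Matrix n n 𝕜, A = Bᴴ * B :=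
  CStarAlgebra.nonneg_iff_eq_star_mul_self.mp hA.nonneg

theorem stmt4_general (n : ℕ) (W : Type*) [AddCommGroup W] [Module ℂ W]
    (σ : W →ₗ[ℝ] W)
    (hσ : ∀ (c : ℂ) (w : W), σ (c • w) = (starRingEnd ℂ) c • σ w)
    (e : Fin n → W)
    (H : Fin n → Matrix (Fin n) (Fin n) ℂ) (hH : ∀ k, (H k).PosSemidef) :
    ∃ lam : ℝ, 0 ≤ lam ∧
      (List.ofFn fun k => Complex.I •
          ∑ i, ∑ j, H k i j • (ExteriorAlgebra.ι ℂ (e i) * ExteriorAlgebra.ι ℂ (σ (e j)))).prod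
        = lam • Complex.I ^ n •
            (List.ofFn fun i =>
              ExteriorAlgebra.ι ℂ (e i) * ExteriorAlgebra.ι ℂ (σ (e i))).prod := by
  obtain ⟨σ', hσ'⟩ : ∃ σ' : W →ₗ⋆[ℂ] W, ⇑σ' = σ :=
    ⟨{ toFun := σ, map_add' := σ.map_add, map_smul' := hσ }, rfl⟩
  rw [← hσ']
  choose B hB using fun k => (hH k).exists_eq_conjTranspose_mul_self
  set C : (Fin n → Fin n) → Matrix (Fin n) (Fin n) ℂ := fun α => .of fun k i => star (B k (α k) i)
  refine ⟨∑ α, Complex.normSq (C α).det, Finset.sum_nonneg fun α _ => Complex.normSq_nonneg _, ?_⟩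
  simp only [hB, ExteriorAlgebra.sum_conjTranspose_mul_smul_ι_mul_ι, List.prod_ofFn_smul,
    List.prod_ofFn_sum]
  have term (α : Fin n → Fin n) :
      (List.ofFn fun k => ExteriorAlgebra.ι ℂ (∑ i, star (B k (α k) i) • e i)
        * ExteriorAlgebra.ι ℂ (σ' (∑ i, star (B k (α k) i) • e i))).prod
        = (Complex.normSq (C α).det : ℂ) •
          (List.ofFn fun k => ExteriorAlgebra.ι ℂ (e k) * ExteriorAlgebra.ι ℂ (σ' (e k))).prod := by
    rw [← Complex.mul_conj, starRingEnd_apply, ← ExteriorAlgebra.prod_ofFn_ι_mul_ι_sum_smul]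
    rfl
  rw [Finset.sum_congr rfl fun α _ => term α, ← Finset.sum_smul, ← Complex.ofReal_sum, smul_comm,
    Complex.coe_smul]
  rfl

/-- Lemma 2.5: in the complexification `W = V ⊗ ℝ ℂ` of a real vector space with a
complex structure (with antilinear conjugation `σ`), if `H₁,…,H_n` are positive
semidefinite Hermitian matrices and `ω(H) = √-1 Σ h_{ij} e_i ∧ ē_j`, then
`ω(H₁) ∧ ⋯ ∧ ω(H_n) = λ (√-1)ⁿ (e₁∧ē₁) ∧ ⋯ ∧ (e_n∧ē_n)` for some `λ ≥ 0`. -/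
theorem stmt4 (n : ℕ) (W : Type*) [AddCommGroup W] [Module ℂ W]
    (σ : W →ₗ[ℝ] W) (hσinv : ∀ w, σ (σ w) = w)
    (hσ : ∀ (c : ℂ) (w : W), σ (c • w) = (starRingEnd ℂ) c • σ w)
    (e : Fin n → W) (he : LinearIndependent ℂ (fun i : Fin n ⊕ Fin n => Sum.elim e (fun j => σ (e j)) i))
    (H : Fin n → Matrix (Fin n) (Fin n) ℂ) (hH : ∀ k, (H k).PosSemidef) :
    ∃ lam : ℝ, 0 ≤ lam ∧
      (List.ofFn fun k => Complex.I •
          ∑ i, ∑ j, H k i j • (ExteriorAlgebra.ι ℂ (e i) * ExteriorAlgebra.ι ℂ (σ (e j)))).prod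
        = lam • Complex.I ^ n •
            (List.ofFn fun i =>
              ExteriorAlgebra.ι ℂ (e i) * ExteriorAlgebra.ι ℂ (σ (e i))).prod :=
  stmt4_general n W σ hσ e H hH
end

section
/- Let A be an abelian group and h : A → ℝ a function such that the function (x,y,z) ↦ h(x+y+z) - h(x+y) - h(y+z) - h(z+x) + h(x) + h(y) + h(z) is bounded on A³. Then there exist a unique symmetric bi-additive form q : A × A → ℝ and a unique additive function l : A → ℝ such that h(x) - q(x,x) - l(x) is bounded on A. Moreover, q(x,x) = lim_{n→∞} 2^{-2n} h(2ⁿ x). -/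
/-!
The second difference `F(x, y) = h (x + y) - h x - h y` satisfies `F(2x, 2y) = 4 F(x, y) + O(1)`
and is additive in `x` up to the bounded cube defect, so its Tate limit `lim F(2ⁿx, 2ⁿy) / 4ⁿ` is a
symmetric bi-additive form `2q`, within bounded distance of `F`. Hence `g x = h x - q(x, x)` is
additive up to a bounded error, and its Tate limit `lim g(2ⁿx) / 2ⁿ` is an additive `l` within
bounded distance of `g`. Conversely, any such decomposition gives
`h(2ⁿx) / 4ⁿ = q(x, x) + l x / 2ⁿ + O(4⁻ⁿ)`, which determines `q` on the diagonal, hence `q` by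
polarization, and then `l`, because a bounded additive function vanishes.
-/

open Filter Topology

section AdditiveMaps

variable {M : Type*} [AddMonoid M]

lemma map_nsmul_of_map_add {φ : M → ℝ} (hφ : ∀ x y, φ (x + y) = φ x + φ y) (n : ℕ) (x : M) :
    φ (n • x) = n * φ x := by
  simpa using map_nsmul (AddMonoidHom.mk' φ hφ) n x

lemma eq_zero_of_map_add_of_abs_le {e : M → ℝ} (he : ∀ x y, e (x + y) = e x + e y) {C : ℝ}
    (hC : ∀ x, |e x| ≤ C) : e = 0 := by
  funext x
  by_contra hx
  have hpos : 0 < |e x| := abs_pos.mpr hx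
  obtain ⟨n, hn⟩ := exists_nat_gt (C / |e x|)
  have hnx := hC (n • x)
  rw [map_nsmul_of_map_add he, abs_mul, Nat.abs_cast] at hnx
  rw [div_lt_iff₀ hpos] at hn
  linarith

end AdditiveMaps

lemma tendsto_div_pow_of_abs_le {f : ℕ → ℝ} {r C : ℝ} (hr : 1 < r) (hf : ∀ n, |f n| ≤ C) :
    Tendsto (fun n => f n / r ^ n) atTop (𝓝 0) := by
  have hr₀ : 0 < r := zero_lt_one.trans hr
  refine squeeze_zero_norm (a := fun n => C * r⁻¹ ^ n) (fun n => ?_) ?_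
  · rw [Real.norm_eq_abs, abs_div, abs_of_pos (pow_pos hr₀ n), inv_pow, ← div_eq_mul_inv]
    gcongr
    exact hf n
  · simpa using (tendsto_pow_atTop_nhds_zero_of_lt_one (inv_nonneg.mpr hr₀.le)
      (inv_lt_one_of_one_lt₀ hr)).const_mul C

lemma eq_add_of_tendsto_div_pow {u v w : ℕ → ℝ} {a b c r C : ℝ} (hr : 1 < r)
    (hu : Tendsto (fun n => u n / r ^ n) atTop (𝓝 a))
    (hv : Tendsto (fun n => v n / r ^ n) atTop (𝓝 b))
    (hw : Tendsto (fun n => w n / r ^ n) atTop (𝓝 c))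
    (hC : ∀ n, |u n - v n - w n| ≤ C) : a = b + c := by
  have hlim : Tendsto (fun n => (u n - v n - w n) / r ^ n) atTop (𝓝 (a - b - c)) := by
    simpa only [sub_div] using (hu.sub hv).sub hw
  linarith [tendsto_nhds_unique hlim (tendsto_div_pow_of_abs_le hr hC)]

section TateLimit

variable {M : Type*} [AddMonoid M]

/-- Junk (`limUnder` of a divergent sequence) unless the limit exists, see `tendsto_tateLimit`. -/
noncomputable def tateLimit (g : M → ℝ) (r : ℝ) (x : M) : ℝ :=
  limUnder atTop fun n : ℕ => g (2 ^ n • x) / r ^ n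

variable {g : M → ℝ} {r C : ℝ}

lemma dist_div_pow_le_geometric (hr : 0 < r) (H : ∀ x, |g (2 • x) - r * g x| ≤ C) (x : M)
    (n : ℕ) : dist (g (2 ^ n • x) / r ^ n) (g (2 ^ (n + 1) • x) / r ^ (n + 1))
      ≤ C / r * r⁻¹ ^ n := by
  have hrn := pow_pos hr (n + 1)
  have hdiff : g (2 ^ n • x) / r ^ n - g (2 ^ (n + 1) • x) / r ^ (n + 1)
      = -(g (2 • 2 ^ n • x) - r * g (2 ^ n • x)) / r ^ (n + 1) := by
    rw [pow_succ', mul_smul]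
    field_simp
    ring
  have hbound : C / r * r⁻¹ ^ n = C / r ^ (n + 1) := by
    rw [pow_succ', inv_pow, ← div_eq_mul_inv, div_div]
  rw [Real.dist_eq, hdiff, hbound, abs_div, abs_neg, abs_of_pos hrn]
  gcongr
  exact H _

lemma tendsto_tateLimit (hr : 1 < r) (H : ∀ x, |g (2 • x) - r * g x| ≤ C) (x : M) :
    Tendsto (fun n : ℕ => g (2 ^ n • x) / r ^ n) atTop (𝓝 (tateLimit g r x)) :=
  tendsto_nhds_limUnder <| cauchySeq_tendsto_of_complete <|
    cauchySeq_of_le_geometric _ _ (inv_lt_one_of_one_lt₀ hr)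
      (dist_div_pow_le_geometric (zero_lt_one.trans hr) H x)

lemma abs_tateLimit_sub_le (hr : 1 < r) (H : ∀ x, |g (2 • x) - r * g x| ≤ C) (x : M) :
    |tateLimit g r x - g x| ≤ C / (r - 1) := by
  have hdist := dist_le_of_le_geometric_of_tendsto₀ _ _ (inv_lt_one_of_one_lt₀ hr)
    (dist_div_pow_le_geometric (zero_lt_one.trans hr) H x) (tendsto_tateLimit hr H x)
  have hr₀ : r ≠ 0 := (zero_lt_one.trans hr).ne'
  have hr₁ : r - 1 ≠ 0 := sub_ne_zero.mpr hr.ne'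
  rw [Real.dist_eq, abs_sub_comm] at hdist
  convert hdist using 1
  · simp
  · field_simp

lemma abs_two_smul_sub_le (hg : ∀ x y, |g (x + y) - g x - g y| ≤ C) (x : M) :
    |g (2 • x) - 2 * g x| ≤ C := by
  simpa only [two_nsmul, two_mul, sub_sub] using hg x x

lemma abs_tateLimit_two_sub_le (hg : ∀ x y, |g (x + y) - g x - g y| ≤ C) (x : M) :
    |tateLimit g 2 x - g x| ≤ C := by
  have H := abs_two_smul_sub_le hg
  simpa only [sub_self, div_one, show (2 : ℝ) - 1 = 1 by norm_num] using
    abs_tateLimit_sub_le one_lt_two H x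

end TateLimit

lemma tateLimit_two_add {M : Type*} [AddCommMonoid M] {g : M → ℝ} {C : ℝ}
    (hg : ∀ x y, |g (x + y) - g x - g y| ≤ C) (x y : M) :
    tateLimit g 2 (x + y) = tateLimit g 2 x + tateLimit g 2 y := by
  have H := abs_two_smul_sub_le hg
  refine eq_add_of_tendsto_div_pow (C := C) one_lt_two (tendsto_tateLimit one_lt_two H (x + y))
    (tendsto_tateLimit one_lt_two H x) (tendsto_tateLimit one_lt_two H y) fun n => ?_
  rw [smul_add]
  exact hg _ _

section CubeDefect

variable {A : Type*} [AddCommMonoid A] {h : A → ℝ} {C : ℝ}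

def cubeDefect (h : A → ℝ) (x y z : A) : ℝ :=
  h (x + y + z) - h (x + y) - h (y + z) - h (z + x) + h x + h y + h z

def secondDiff (h : A → ℝ) (p : A × A) : ℝ := h (p.1 + p.2) - h p.1 - h p.2

lemma secondDiff_swap (p : A × A) : secondDiff h p.swap = secondDiff h p := by
  simp only [secondDiff, Prod.fst_swap, Prod.snd_swap, add_comm p.2]; ring

lemma secondDiff_add_left_sub (x y z : A) :
    secondDiff h (x + y, z) - secondDiff h (x, z) - secondDiff h (y, z) = cubeDefect h x y z := by
  simp only [secondDiff, cubeDefect, add_comm z x]; ring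

lemma secondDiff_two_smul_sub (x y : A) :
    secondDiff h (2 • (x, y)) - 4 * secondDiff h (x, y)
      = cubeDefect h x x (2 • y) + 2 * cubeDefect h y y x := by
  simp only [secondDiff, cubeDefect, Prod.smul_mk, ← two_smul ℕ x, ← two_smul ℕ y,
    add_comm (2 • y) x, add_comm x y]
  ring

lemma abs_secondDiff_two_smul_sub_le (hC : ∀ x y z, |cubeDefect h x y z| ≤ C) (p : A × A) :
    |secondDiff h (2 • p) - 4 * secondDiff h p| ≤ 3 * C := by
  obtain ⟨x, y⟩ := p
  rw [secondDiff_two_smul_sub]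
  calc _ ≤ |cubeDefect h x x (2 • y)| + |2 * cubeDefect h y y x| := abs_add_le _ _
    _ ≤ C + 2 * C := by rw [abs_mul, abs_two]; gcongr <;> exact hC _ _ _
    _ = 3 * C := by ring

lemma tateLimit_secondDiff_swap (p : A × A) :
    tateLimit (secondDiff h) 4 p.swap = tateLimit (secondDiff h) 4 p := by
  unfold tateLimit
  congr 1
  funext n
  rw [show 2 ^ n • p.swap = (2 ^ n • p).swap from rfl, secondDiff_swap]

lemma tateLimit_secondDiff_add_left (hC : ∀ x y z, |cubeDefect h x y z| ≤ C) (x y z : A) :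
    tateLimit (secondDiff h) 4 (x + y, z)
      = tateLimit (secondDiff h) 4 (x, z) + tateLimit (secondDiff h) 4 (y, z) := by
  have H := abs_secondDiff_two_smul_sub_le hC
  have h4 : (1 : ℝ) < 4 := by norm_num
  refine eq_add_of_tendsto_div_pow (C := C) h4 (tendsto_tateLimit h4 H _)
    (tendsto_tateLimit h4 H _) (tendsto_tateLimit h4 H _) fun n => ?_
  rw [Prod.smul_mk, Prod.smul_mk, Prod.smul_mk, smul_add, secondDiff_add_left_sub]
  exact hC _ _ _

lemma abs_tateLimit_secondDiff_sub_le (hC : ∀ x y z, |cubeDefect h x y z| ≤ C) (p : A × A) :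
    |tateLimit (secondDiff h) 4 p - secondDiff h p| ≤ C := by
  have := abs_tateLimit_sub_le (by norm_num) (abs_secondDiff_two_smul_sub_le hC) p
  rwa [show 3 * C / (4 - 1) = C by ring] at this

end CubeDefect

section QuadLinDecomp

variable {A : Type*} [AddMonoid A]

lemma biadditive_diag_add {q : A → A → ℝ} (hs : ∀ x y, q x y = q y x)
    (ha : ∀ x y z, q (x + y) z = q x z + q y z) (x y : A) :
    q (x + y) (x + y) = q x x + 2 * q x y + q y y := by
  rw [ha, hs x, hs y, ha, ha, hs y x]
  ring

lemma biadditive_diag_nsmul {q : A → A → ℝ} (hs : ∀ x y, q x y = q y x)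
    (ha : ∀ x y z, q (x + y) z = q x z + q y z) (n : ℕ) (x : A) :
    q (n • x) (n • x) = n * n * q x x := by
  have hleft : ∀ y, q (n • x) y = n * q x y := fun y =>
    map_nsmul_of_map_add (φ := (q · y)) (ha · · y) n x
  rw [hleft, hs, hleft]
  ring

def IsQuadLinDecomp (h : A → ℝ) (q : A → A → ℝ) (l : A → ℝ) : Prop :=
  (∀ x y, q x y = q y x) ∧ (∀ x y z, q (x + y) z = q x z + q y z) ∧
    (∀ x y, l (x + y) = l x + l y) ∧ ∃ C, ∀ x, |h x - q x x - l x| ≤ C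

variable {h : A → ℝ} {q q₁ q₂ : A → A → ℝ} {l l₁ l₂ : A → ℝ}

theorem IsQuadLinDecomp.tendsto (hd : IsQuadLinDecomp h q l) (x : A) :
    Tendsto (fun n : ℕ => h (2 ^ n • x) / 4 ^ n) atTop (𝓝 (q x x)) := by
  obtain ⟨hs, ha, hl, C, hC⟩ := hd
  have key : ∀ n : ℕ, q x x + l x / 2 ^ n
      + (h (2 ^ n • x) - q (2 ^ n • x) (2 ^ n • x) - l (2 ^ n • x)) / 4 ^ n
      = h (2 ^ n • x) / 4 ^ n := fun n => by
    rw [biadditive_diag_nsmul hs ha, map_nsmul_of_map_add hl, show (4 : ℝ) ^ n = 2 ^ n * 2 ^ n by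
      rw [← mul_pow]; norm_num]
    push_cast
    field_simp
    ring
  have hlim := ((tendsto_const_nhds (x := q x x)).add
    (tendsto_div_pow_of_abs_le one_lt_two fun _ => le_refl |l x|)).add
    (tendsto_div_pow_of_abs_le (by norm_num : (1 : ℝ) < 4) fun n => hC (2 ^ n • x))
  rw [add_zero, add_zero] at hlim
  exact hlim.congr key

theorem IsQuadLinDecomp.eq (hd₁ : IsQuadLinDecomp h q₁ l₁) (hd₂ : IsQuadLinDecomp h q₂ l₂) :
    q₁ = q₂ ∧ l₁ = l₂ := by
  have hdiag : ∀ x, q₁ x x = q₂ x x := fun x =>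
    tendsto_nhds_unique (hd₁.tendsto x) (hd₂.tendsto x)
  obtain ⟨hs₁, ha₁, hl₁, C₁, hC₁⟩ := hd₁
  obtain ⟨hs₂, ha₂, hl₂, C₂, hC₂⟩ := hd₂
  have hq : q₁ = q₂ := by
    funext x y
    linarith [biadditive_diag_add hs₁ ha₁ x y, biadditive_diag_add hs₂ ha₂ x y,
      hdiag x, hdiag y, hdiag (x + y)]
  have hl : (fun x => l₁ x - l₂ x) = 0 := by
    refine eq_zero_of_map_add_of_abs_le (C := C₂ + C₁) (fun x y => by rw [hl₁, hl₂]; ring)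
      fun x => ?_
    rw [show l₁ x - l₂ x = (h x - q₂ x x - l₂ x) - (h x - q₁ x x - l₁ x) by rw [hdiag]; ring]
    exact (abs_sub _ _).trans (add_le_add (hC₂ x) (hC₁ x))
  exact ⟨hq, funext fun x => sub_eq_zero.mp (congrFun hl x)⟩

end QuadLinDecomp

theorem exists_isQuadLinDecomp {A : Type*} [AddCommMonoid A] {h : A → ℝ} {C : ℝ}
    (hC : ∀ x y z, |cubeDefect h x y z| ≤ C) : ∃ q l, IsQuadLinDecomp h q l := by
  -- `secondDiff h` polarizes the quadratic part, so its Tate limit is twice the form.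
  set q : A → A → ℝ := fun x y => tateLimit (secondDiff h) 4 (x, y) / 2 with hq
  set g : A → ℝ := fun x => h x - q x x with hg
  have hs : ∀ x y, q x y = q y x := fun x y => by
    simp only [hq]
    rw [← tateLimit_secondDiff_swap (x, y)]
    rfl
  have ha : ∀ x y z, q (x + y) z = q x z + q y z := fun x y z => by
    simp only [hq, tateLimit_secondDiff_add_left hC, add_div]
  have hg_add : ∀ x y, |g (x + y) - g x - g y| ≤ C := fun x y => by
    have e : g (x + y) - g x - g y = secondDiff h (x, y) - tateLimit (secondDiff h) 4 (x, y) := by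
      simp only [hg]
      rw [biadditive_diag_add hs ha]
      simp only [hq, secondDiff]
      ring
    rw [e, abs_sub_comm]
    exact abs_tateLimit_secondDiff_sub_le hC (x, y)
  refine ⟨q, tateLimit g 2, hs, ha, tateLimit_two_add hg_add, C, fun x => ?_⟩
  rw [show h x - q x x - tateLimit g 2 x = -(tateLimit g 2 x - g x) by simp only [hg]; ring,
    abs_neg]
  exact abs_tateLimit_two_sub_le hg_add x

/-- A function on an abelian group with bounded "cube" defect decomposes uniquely as a
quadratic part (a symmetric bi-additive form evaluated on the diagonal) plus a linear
part, up to bounded functions; moreover the quadratic part is the Tate limit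
`q(x,x) = lim 2^{-2n} h(2ⁿ x)`. -/
theorem stmt7 (A : Type*) [AddCommGroup A] (h : A → ℝ)
    (hcube : ∃ C : ℝ, ∀ x y z : A,
      |h (x + y + z) - h (x + y) - h (y + z) - h (z + x) + h x + h y + h z| ≤ C) :
    (∃! p : (A → A → ℝ) × (A → ℝ),
      (∀ x y, p.1 x y = p.1 y x) ∧
      (∀ x y z, p.1 (x + y) z = p.1 x z + p.1 y z) ∧
      (∀ x y, p.2 (x + y) = p.2 x + p.2 y) ∧
      (∃ C : ℝ, ∀ x, |h x - p.1 x x - p.2 x| ≤ C)) ∧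
    (∀ p : (A → A → ℝ) × (A → ℝ),
      ((∀ x y, p.1 x y = p.1 y x) ∧
       (∀ x y z, p.1 (x + y) z = p.1 x z + p.1 y z) ∧
       (∀ x y, p.2 (x + y) = p.2 x + p.2 y) ∧
       (∃ C : ℝ, ∀ x, |h x - p.1 x x - p.2 x| ≤ C)) →
      ∀ x, Filter.Tendsto (fun n : ℕ => h ((2 ^ n) • x) / 4 ^ n)
        Filter.atTop (nhds (p.1 x x))) := by
  obtain ⟨C, hC⟩ := hcube
  obtain ⟨q, l, hd⟩ := exists_isQuadLinDecomp hC
  refine ⟨⟨(q, l), hd, fun p hp => ?_⟩, fun p hp => IsQuadLinDecomp.tendsto hp⟩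
  obtain ⟨hq, hl⟩ := IsQuadLinDecomp.eq hp hd
  exact Prod.ext hq hl
end
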